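/- arXiv:1604.03067 — 8 statements merged into one kernel-verified Lean document; each statement's English description precedes it below -/
import Mathlib

section
/- Let f : E → B be a covering map of topological spaces. Then the map sending a path γ to the pair (γ(0), f ∘ γ) is a homeomorphism from the subspace {γ ∈ C([0,1], E) : f(γ(0)) = f(γ(1))} of the path space of E onto the subspace {(e, ω) ∈ E × C([0,1], B) : ω(0) = f(e) and ω(1) = f(e)}. -/
section Aux

open Set Topology

section Lifting

variable {E B : Type*} [TopologicalSpace E] [TopologicalSpace B] {f : E → B}

lemma exists_local_lift (hf : IsCoveringMap f) {A : Type*} [TopologicalSpace A]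
    {H : A × unitInterval → B} (Hc : Continuous H) {h₀ : A → E} (h₀c : Continuous h₀)
    (hh₀ : ∀ a, f (h₀ a) = H (a, 0)) (a : A) :
    ∃ N : Set A, IsOpen N ∧ a ∈ N ∧ ∃ G : A × unitInterval → E,
      ContinuousOn G (N ×ˢ univ) ∧ (∀ p : A × unitInterval, p.1 ∈ N → f (G p) = H p) ∧
      ∀ a' ∈ N, G (a', 0) = h₀ a' := by
  classical
  have hne : ∀ s : unitInterval, Nonempty (f ⁻¹' {H (a, s)}) := by
    intro s
    obtain ⟨Γ, hΓ, -⟩ := hf.exists_path_lifts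
      ⟨fun s => H (a, s), Hc.comp (continuous_const.prodMk continuous_id)⟩ (h₀ a) (hh₀ a).symm
    exact ⟨⟨Γ s, congrFun hΓ s⟩⟩
  -- rectangles on which `H` lands in an evenly covered set
  have key : ∀ t : unitInterval, ∃ V : Set A, ∃ W : Set unitInterval,
      IsOpen V ∧ IsOpen W ∧ a ∈ V ∧ t ∈ W ∧
      ∀ p : A × unitInterval, p.1 ∈ V → p.2 ∈ W →
        H p ∈ (hf (H (a, t))).toTrivialization.baseSet := by
    intro t
    have hb := (hf (H (a, t))).mem_toTrivialization_baseSet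
    have hopen : IsOpen (H ⁻¹' (hf (H (a, t))).toTrivialization.baseSet) :=
      (hf (H (a, t))).toTrivialization.open_baseSet.preimage Hc
    obtain ⟨V, W, hV, hW, haV, htW, hsub⟩ := isOpen_prod_iff.1 hopen a t hb
    exact ⟨V, W, hV, hW, haV, htW, fun p h1 h2 => hsub (mk_mem_prod h1 h2)⟩
  choose V W hV hW haV htW hVW using key
  obtain ⟨F, hF⟩ := isCompact_univ.elim_finite_subcover W hW
    (fun t _ => mem_iUnion.2 ⟨t, htW t⟩)
  obtain ⟨δ, δpos, hδ⟩ := lebesgue_number_lemma_of_metric isCompact_univ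
    (fun t : F => hW t)
    (fun x _ => by
      obtain ⟨t, htF, hxt⟩ := Set.mem_iUnion₂.1 (hF (mem_univ x))
      exact mem_iUnion.2 ⟨⟨t, htF⟩, hxt⟩)
  obtain ⟨n, hn⟩ := exists_nat_one_div_lt δpos
  set n' : ℕ := n + 1 with hn'
  have hd : (0:ℝ) < (n' : ℝ) := by positivity
  set N : Set A := ⋂ t ∈ F, V t with hN
  have hNopen : IsOpen N := isOpen_biInter_finset fun t _ => hV t
  have haN : a ∈ N := mem_iInter₂.2 fun t _ => haV t
  -- each short segment lands in an evenly covered set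
  have hseg : ∀ i : Fin n', ∃ b : unitInterval, ∀ p : A × unitInterval, p.1 ∈ N →
      (i : ℝ) / (n' : ℝ) ≤ (p.2 : ℝ) → (p.2 : ℝ) ≤ ((i : ℝ) + 1) / (n' : ℝ) →
      H p ∈ (hf (H (a, b))).toTrivialization.baseSet := by
    intro i
    have hi1 : (i : ℝ) / (n' : ℝ) ∈ unitInterval := by
      constructor
      · positivity
      · rw [div_le_one hd]
        exact_mod_cast i.2.le
    obtain ⟨t, ht⟩ := hδ ⟨(i : ℝ) / (n' : ℝ), hi1⟩ (mem_univ _)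
    refine ⟨t, fun p hpN hp1 hp2 => hVW t p ?_ ?_⟩
    · exact mem_iInter₂.1 hpN t t.2
    · apply ht
      rw [Metric.mem_ball, Subtype.dist_eq, Real.dist_eq]
      have h1 : |(p.2 : ℝ) - (i : ℝ) / (n' : ℝ)| ≤ 1 / (n' : ℝ) := by
        rw [abs_sub_le_iff]
        constructor
        · have : ((i : ℝ) + 1) / (n' : ℝ) = (i : ℝ) / (n' : ℝ) + 1 / (n' : ℝ) := by ring
          linarith [hp2, this ▸ hp2]
        · have : (0:ℝ) < 1 / (n' : ℝ) := by positivity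
          linarith
      have h2 : 1 / (n' : ℝ) < δ := by
        have : ((n' : ℝ)) = (n : ℝ) + 1 := by exact_mod_cast rfl
        rw [this]; exact hn
      exact lt_of_le_of_lt h1 h2
  choose b hb using hseg
  -- inductive construction of the lift on `N ×ˢ [0, m/n']`
  have main : ∀ m : ℕ, m ≤ n' → ∃ G : A × unitInterval → E,
      ContinuousOn G (N ×ˢ {t : unitInterval | (t : ℝ) ≤ (m : ℝ) / (n' : ℝ)}) ∧
      (∀ p : A × unitInterval, p.1 ∈ N → (p.2 : ℝ) ≤ (m : ℝ) / (n' : ℝ) → f (G p) = H p) ∧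
      ∀ a' ∈ N, G (a', 0) = h₀ a' := by
    intro m
    induction m with
    | zero =>
      intro _
      refine ⟨fun p => h₀ p.1, (h₀c.comp continuous_fst).continuousOn, ?_, fun a' _ => rfl⟩
      rintro ⟨a', t⟩ _ ht
      have ht0 : t = 0 := by
        apply Subtype.ext
        have := t.2.1
        simp only [Nat.cast_zero, zero_div] at ht
        simpa using le_antisymm ht this
      rw [ht0]
      exact hh₀ a'
    | succ m ih =>
      intro hm
      obtain ⟨G, hGc, hGf, hG0⟩ := ih (Nat.le_of_succ_le hm)
      set i : Fin n' := ⟨m, hm⟩ with hi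
      set T := (hf (H (a, b i))).toTrivialization with hT
      have hc1 : (m : ℝ) / (n' : ℝ) ∈ unitInterval := by
        constructor
        · positivity
        · rw [div_le_one hd]
          exact_mod_cast (Nat.le_of_succ_le hm)
      set c : unitInterval := ⟨(m : ℝ) / (n' : ℝ), hc1⟩ with hcdef
      have hicast : ((i : Fin n') : ℝ) = (m : ℝ) := by norm_cast
      have hcseg2 : (c : ℝ) ≤ ((i : ℝ) + 1) / (n' : ℝ) := by
        rw [hicast]
        show (m : ℝ) / (n' : ℝ) ≤ ((m : ℝ) + 1) / (n' : ℝ)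
        gcongr
        linarith
      have hGfc : ∀ a' ∈ N, f (G (a', c)) = H (a', c) := fun a' ha' =>
        hGf (a', c) ha' le_rfl
      have hGcsrc : ∀ a' ∈ N, G (a', c) ∈ T.source := by
        intro a' ha'
        rw [T.mem_source, hGfc a' ha']
        exact hb i (a', c) ha' (by rw [hicast]) hcseg2
      refine ⟨fun p => if (p.2 : ℝ) ≤ (m : ℝ) / (n' : ℝ) then G p else
          T.toPartialHomeomorph.symm (H p, (T (G (p.1, c))).2), ?_, ?_, ?_⟩
      · -- continuity
        simp only [Nat.cast_add, Nat.cast_one]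
        apply ContinuousOn.if
        · rintro ⟨a', t⟩ ⟨hqs, hqf⟩
          have hteq : (t : ℝ) = (m : ℝ) / (n' : ℝ) :=
            frontier_le_subset_eq (continuous_subtype_val.comp continuous_snd)
              continuous_const hqf
          have htc : t = c := Subtype.ext hteq
          have haN' : a' ∈ N := hqs.1
          rw [htc, ← hGfc a' haN']
          exact (T.symm_apply_mk_proj (hGcsrc a' haN')).symm
        · apply hGc.mono
          rintro ⟨a', t⟩ ⟨hqs, hqc⟩
          have : (t : ℝ) ≤ (m : ℝ) / (n' : ℝ) := by
            have hcl : closure {q : A × unitInterval | (q.2 : ℝ) ≤ (m : ℝ) / (n' : ℝ)}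
                = {q : A × unitInterval | (q.2 : ℝ) ≤ (m : ℝ) / (n' : ℝ)} :=
              (isClosed_le (continuous_subtype_val.comp continuous_snd)
                continuous_const).closure_eq
            rw [hcl] at hqc
            exact hqc
          exact ⟨hqs.1, this⟩
        · -- continuity of the second branch
          have hsub : N ×ˢ {t : unitInterval | (t : ℝ) ≤ ((m : ℝ) + 1) / (n' : ℝ)} ∩
              closure {q : A × unitInterval | ¬((q.2 : ℝ) ≤ (m : ℝ) / (n' : ℝ))} ⊆
              {q : A × unitInterval | q.1 ∈ N ∧ (m : ℝ) / (n' : ℝ) ≤ (q.2 : ℝ) ∧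
                (q.2 : ℝ) ≤ ((m : ℝ) + 1) / (n' : ℝ)} := by
            rintro ⟨a', t⟩ ⟨hqs, hqc⟩
            refine ⟨hqs.1, ?_, hqs.2⟩
            have : closure {q : A × unitInterval | ¬((q.2 : ℝ) ≤ (m : ℝ) / (n' : ℝ))} ⊆
                {q : A × unitInterval | (m : ℝ) / (n' : ℝ) ≤ (q.2 : ℝ)} := by
              have heq : {q : A × unitInterval | ¬((q.2 : ℝ) ≤ (m : ℝ) / (n' : ℝ))}
                  = {q : A × unitInterval | (m : ℝ) / (n' : ℝ) < (q.2 : ℝ)} := by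
                ext q; simp [not_le]
              rw [heq]
              exact closure_lt_subset_le continuous_const
                (continuous_subtype_val.comp continuous_snd)
            exact this hqc
          apply ContinuousOn.mono ?_ hsub
          set D := {q : A × unitInterval | q.1 ∈ N ∧ (m : ℝ) / (n' : ℝ) ≤ (q.2 : ℝ) ∧
            (q.2 : ℝ) ≤ ((m : ℝ) + 1) / (n' : ℝ)} with hD
          have hbase : ∀ q ∈ D, H q ∈ T.baseSet := by
            rintro q ⟨hq1, hq2, hq3⟩
            exact hb i q hq1 (by rw [hicast]; exact hq2) (by rw [hicast]; exact hq3)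
          have cinner : ContinuousOn (fun q : A × unitInterval => G (q.1, c)) D := by
            apply hGc.comp ((continuous_fst.prodMk continuous_const).continuousOn)
            rintro q hq
            exact mk_mem_prod hq.1 (mem_setOf.2 le_rfl)
          have cT : ContinuousOn (fun q : A × unitInterval => T (G (q.1, c))) D := by
            apply T.toPartialHomeomorph.continuousOn.comp cinner
            exact fun q hq => hGcsrc q.1 hq.1
          have cpair : ContinuousOn
              (fun q : A × unitInterval => (H q, (T (G (q.1, c))).2)) D :=
            Hc.continuousOn.prodMk (continuous_snd.comp_continuousOn cT)
          apply T.toPartialHomeomorph.continuousOn_symm.comp cpair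
          exact fun q hq => T.mem_target.2 (hbase q hq)
      · -- lifts H
        rintro ⟨a', t⟩ ha' ht
        dsimp only
        by_cases h : (t : ℝ) ≤ (m : ℝ) / (n' : ℝ)
        · rw [if_pos h]
          exact hGf (a', t) ha' h
        · rw [if_neg h]
          apply T.proj_symm_apply
          apply T.mem_target.2
          apply hb i (a', t) ha' (by rw [hicast]; exact (not_le.1 h).le)
          rw [hicast]
          push_cast at ht ⊢
          exact ht
      · intro a' ha'
        have h0 : ((0 : unitInterval) : ℝ) ≤ (m : ℝ) / (n' : ℝ) := by
          rw [Set.Icc.coe_zero]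
          positivity
        dsimp only
        rw [if_pos h0]
        exact hG0 a' ha'
  obtain ⟨G, hGc, hGf, hG0⟩ := main n' le_rfl
  have huniv : {t : unitInterval | (t : ℝ) ≤ (n' : ℝ) / (n' : ℝ)} = univ := by
    ext t
    simp only [mem_setOf_eq, mem_univ, iff_true]
    rw [div_self hd.ne']
    exact t.2.2
  refine ⟨N, hNopen, haN, G, ?_, ?_, hG0⟩
  · rwa [huniv] at hGc
  · intro p hp
    apply hGf p hp
    rw [div_self hd.ne']
    exact p.2.2.2


lemma exists_lift (hf : IsCoveringMap f) {A : Type*} [TopologicalSpace A]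
    {H : A × unitInterval → B} (Hc : Continuous H) {h₀ : A → E} (h₀c : Continuous h₀)
    (hh₀ : ∀ a, f (h₀ a) = H (a, 0)) :
    ∃ G : A × unitInterval → E, Continuous G ∧ (∀ p, f (G p) = H p) ∧ ∀ a, G (a, 0) = h₀ a := by
  choose N hNopen haN G hGc hGf hG0 using fun a => exists_local_lift hf Hc h₀c hh₀ a
  have uniq : ∀ a a', a' ∈ N a → ∀ t, G a (a', t) = G a' (a', t) := by
    intro a a' ha'
    have h1 : Continuous fun t => G a (a', t) :=
      (hGc a).comp_continuous (continuous_const.prodMk continuous_id)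
        (fun t => mk_mem_prod ha' (mem_univ t))
    have h2 : Continuous fun t => G a' (a', t) :=
      (hGc a').comp_continuous (continuous_const.prodMk continuous_id)
        (fun t => mk_mem_prod (haN a') (mem_univ t))
    have heq := hf.eq_of_comp_eq h1 h2 (funext fun t => by
      show f (G a (a', t)) = f (G a' (a', t))
      rw [hGf a (a', t) ha', hGf a' (a', t) (haN a')]) 0
      (by rw [hG0 a a' ha', hG0 a' a' (haN a')])
    exact fun t => congrFun heq t
  refine ⟨fun p => G p.1 p, ?_, fun p => hGf p.1 p (haN p.1), fun a => hG0 a a (haN a)⟩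
  rw [continuous_iff_continuousAt]
  rintro ⟨a, t⟩
  have hmem : N a ×ˢ (univ : Set unitInterval) ∈ 𝓝 (a, t) :=
    ((hNopen a).prod isOpen_univ).mem_nhds (mk_mem_prod (haN a) (mem_univ t))
  have hev : G a =ᶠ[𝓝 (a, t)] fun p : A × unitInterval => G p.1 p :=
    Filter.eventuallyEq_of_mem hmem (fun q hq => uniq a q.1 hq.1 q.2)
  exact ((hGc a).continuousAt hmem).congr hev

end Lifting

theorem covering_path_space_homeomorph_aux {E B : Type*} [TopologicalSpace E] [TopologicalSpace B]
    (f : C(E, B)) (hf : IsCoveringMap f) :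
    ∃ e : {γ : C(unitInterval, E) // f (γ 0) = f (γ 1)} ≃ₜ
          {p : E × C(unitInterval, B) // p.2 0 = f p.1 ∧ p.2 1 = f p.1},
      ∀ γ, (e γ : E × C(unitInterval, B)) = ((γ : C(unitInterval, E)) 0, f.comp γ) := by
  classical
  set A := {p : E × C(unitInterval, B) // p.2 0 = f p.1 ∧ p.2 1 = f p.1} with hA
  have Hc : Continuous fun q : A × unitInterval => (q.1 : E × C(unitInterval, B)).2 q.2 :=
    continuous_eval.comp
      ((continuous_snd.comp (continuous_subtype_val.comp continuous_fst)).prodMk continuous_snd)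
  obtain ⟨G, hGc, hGf, hG0⟩ := exists_lift hf Hc
    (h₀ := fun a : A => (a : E × C(unitInterval, B)).1)
    (continuous_fst.comp continuous_subtype_val)
    (fun a => a.2.1.symm)
  have hGcont : ∀ a : A, Continuous fun t => G (a, t) :=
    fun a => hGc.comp (continuous_const.prodMk continuous_id)
  have left : ∀ γ : {γ : C(unitInterval, E) // f (γ 0) = f (γ 1)}, ∀ t,
      G (⟨((γ : C(unitInterval, E)) 0, f.comp (γ : C(unitInterval, E))), rfl, γ.2.symm⟩, t)
        = (γ : C(unitInterval, E)) t := by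
    intro γ
    set a : A := ⟨((γ : C(unitInterval, E)) 0, f.comp (γ : C(unitInterval, E))), rfl, γ.2.symm⟩
    have heq := hf.eq_of_comp_eq (g₁ := fun t => G (a, t)) (g₂ := fun t => γ.1 t)
      (hGcont a) γ.1.continuous (funext fun t => by
        show f (G (a, t)) = f (γ.1 t)
        exact hGf (a, t)) 0 (hG0 a)
    exact fun t => congrFun heq t
  refine ⟨{
    toFun := fun γ => ⟨(γ.1 0, f.comp γ.1), rfl, γ.2.symm⟩
    invFun := fun a => ⟨⟨fun t => G (a, t), hGcont a⟩, by
      show f (G (a, 0)) = f (G (a, 1))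
      rw [hGf, hGf]
      show (a : E × C(unitInterval, B)).2 0 = (a : E × C(unitInterval, B)).2 1
      rw [a.2.1, a.2.2]⟩
    left_inv := fun γ => Subtype.ext (ContinuousMap.ext fun t => left γ t)
    right_inv := fun a => Subtype.ext (Prod.ext (hG0 a) (ContinuousMap.ext fun t => hGf (a, t)))
    continuous_toFun := by
      apply Continuous.subtype_mk
      exact ((continuous_eval_const 0).comp continuous_subtype_val).prodMk
        ((ContinuousMap.continuous_postcomp f).comp continuous_subtype_val)
    continuous_invFun := by
      apply Continuous.subtype_mk
      exact ContinuousMap.continuous_of_continuous_uncurry _ hGc }, fun γ => rfl⟩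


end Aux

/-- If `f : E → B` is a covering map, then `γ ↦ (γ(0), f ∘ γ)` is a homeomorphism from the
space of paths in `E` whose endpoints lie in the same fiber of `f` onto the space of pairs
`(e, ω)` of a point `e ∈ E` and a loop `ω` in `B` based at `f(e)`. -/
theorem covering_path_space_homeomorph {E B : Type*} [TopologicalSpace E] [TopologicalSpace B]
    (f : C(E, B)) (hf : IsCoveringMap f) :
    ∃ e : {γ : C(unitInterval, E) // f (γ 0) = f (γ 1)} ≃ₜ
          {p : E × C(unitInterval, B) // p.2 0 = f p.1 ∧ p.2 1 = f p.1},
      ∀ γ, (e γ : E × C(unitInterval, B)) = ((γ : C(unitInterval, E)) 0, f.comp γ) := by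
  exact covering_path_space_homeomorph_aux f hf
end

section
/- Let M be a compact smooth manifold without boundary, and let i : M → ℝⁿ be a smooth embedding admitting a tubular neighborhood of radius ε for some ε > 0. Suppose v ∈ ℝⁿ lies in this tubular neighborhood, i.e. v = i(x) + w for some x ∈ M and w ∈ T_xᗮ with ‖w‖ < ε. Then the open subset U = {y ∈ M : ‖v − i(y)‖ < ε} of M, with the subspace topology, is a contractible topological space (in particular it is nonempty, since it contains x). -/
open scoped Manifold RealInnerProductSpace
open Topology Set Filter
set_option linter.unusedSectionVars false
set_option linter.unusedVariables false


theorem aux_mfderiv_zero {d : ℕ} {M : Type*} [TopologicalSpace M]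
    [ChartedSpace (EuclideanSpace ℝ (Fin d)) M]
    [IsManifold (𝓡 d) (⊤ : ℕ∞) M]
    {g : M → ℝ} {y₀ : M} (hd : MDifferentiableAt (𝓡 d) 𝓘(ℝ, ℝ) g y₀)
    (hmin : IsLocalMin g y₀) : mfderiv (𝓡 d) 𝓘(ℝ, ℝ) g y₀ = 0 := by
  have hw : writtenInExtChartAt (𝓡 d) 𝓘(ℝ, ℝ) y₀ g
      = g ∘ (extChartAt (𝓡 d) y₀).symm := by
    simp [writtenInExtChartAt, extChartAt_model_space_eq_id, chartAt_self_eq]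
  have hsymm : Tendsto (extChartAt (𝓡 d) y₀).symm
      (𝓝 ((extChartAt (𝓡 d) y₀) y₀)) (𝓝 y₀) := by
    have := continuousAt_extChartAt_symm (I := 𝓡 d) y₀
    rwa [ContinuousAt, extChartAt_to_inv] at this
  have key : IsLocalMin (writtenInExtChartAt (𝓡 d) 𝓘(ℝ, ℝ) y₀ g)
      ((extChartAt (𝓡 d) y₀) y₀) := by
    rw [hw]
    have h1 : ∀ᶠ z in 𝓝 ((extChartAt (𝓡 d) y₀) y₀),
        g y₀ ≤ g ((extChartAt (𝓡 d) y₀).symm z) := hsymm.eventually hmin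
    have h2 : (g ∘ (extChartAt (𝓡 d) y₀).symm) ((extChartAt (𝓡 d) y₀) y₀) = g y₀ := by
      simp [extChartAt_to_inv]
    show IsMinFilter (g ∘ (extChartAt (𝓡 d) y₀).symm) _ _
    rw [IsMinFilter, h2]
    exact h1
  rw [hd.mfderiv]
  have hr : Set.range (𝓡 d) = univ := by simp
  rw [hr, fderivWithin_univ]
  exact key.fderiv_eq_zero

theorem aux_minOn_normal {d n : ℕ} {M : Type*} [TopologicalSpace M]
    [ChartedSpace (EuclideanSpace ℝ (Fin d)) M]
    [IsManifold (𝓡 d) (⊤ : ℕ∞) M]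
    {i : M → EuclideanSpace ℝ (Fin n)}
    (hsmooth : ContMDiff (𝓡 d) (𝓡 n) (⊤ : ℕ∞) i)
    (p : EuclideanSpace ℝ (Fin n)) {y₀ : M}
    (hmin : IsMinOn (fun y => ‖p - i y‖) Set.univ y₀) :
    p - i y₀ ∈ (LinearMap.range (ContinuousLinearMap.toLinearMap (mfderiv (𝓡 d) (𝓡 n) i y₀)) :
      Submodule ℝ (EuclideanSpace ℝ (Fin n)))ᗮ := by
  let E := EuclideanSpace ℝ (Fin n)
  set f₂ : E → ℝ := fun z => ‖p - z‖ ^ 2 with hf₂def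
  have hf₂ : ContDiff ℝ (↑(⊤ : ℕ∞)) f₂ := (contDiff_const.sub contDiff_id).norm_sq (𝕜 := ℝ)
  have hgc : ContMDiff (𝓡 d) 𝓘(ℝ, ℝ) (⊤ : ℕ∞) (f₂ ∘ i) := hf₂.contMDiff.comp hsmooth
  have hglm : IsLocalMin (f₂ ∘ i) y₀ := by
    apply Filter.Eventually.of_forall
    intro y
    exact pow_le_pow_left₀ (norm_nonneg _) (hmin (mem_univ y)) 2
  have hcrit : mfderiv (𝓡 d) 𝓘(ℝ, ℝ) (f₂ ∘ i) y₀ = 0 :=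
    aux_mfderiv_zero ((hgc y₀).mdifferentiableAt (by simp)) hglm
  have hi : MDifferentiableAt (𝓡 d) (𝓡 n) i y₀ := (hsmooth y₀).mdifferentiableAt (by simp)
  have hf₂at : MDifferentiableAt (𝓡 n) 𝓘(ℝ, ℝ) f₂ (i y₀) :=
    (hf₂.contMDiff (i y₀)).mdifferentiableAt (by simp)
  have hcomp := mfderiv_comp y₀ hf₂at hi
  have hfd : HasFDerivAt f₂
      (2 • (innerSL ℝ (p - i y₀)).comp (-(ContinuousLinearMap.id ℝ E))) (i y₀) := by
    have h1 : HasFDerivAt (fun z : E => p - z) (-(ContinuousLinearMap.id ℝ E)) (i y₀) :=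
      (hasFDerivAt_id (i y₀)).const_sub p
    exact h1.norm_sq
  have hmf : mfderiv (𝓡 n) 𝓘(ℝ, ℝ) f₂ (i y₀)
      = (2 • (innerSL ℝ (p - i y₀)).comp (-(ContinuousLinearMap.id ℝ E)) :
          E →L[ℝ] ℝ) := by
    rw [mfderiv_eq_fderiv]
    exact hfd.fderiv
  rw [Submodule.mem_orthogonal]
  rintro z ⟨u, rfl⟩
  have h0 : (mfderiv (𝓡 d) 𝓘(ℝ, ℝ) (f₂ ∘ i) y₀) u = 0 := by rw [hcrit]; rfl
  rw [hcomp, hmf] at h0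
  have h0' : (2 : ℕ) • ⟪p - i y₀, -(@id (EuclideanSpace ℝ (Fin n)) (mfderiv (𝓡 d) (𝓡 n) i y₀ u))⟫ = 0 := h0
  rw [inner_neg_right, two_nsmul] at h0'
  have : ⟪p - i y₀, (@id (EuclideanSpace ℝ (Fin n)) (mfderiv (𝓡 d) (𝓡 n) i y₀ u))⟫ = 0 := by linarith
  rw [real_inner_comm] at this
  exact this
section TubularAux

variable {d n : ℕ} {M : Type*} [TopologicalSpace M]
    [ChartedSpace (EuclideanSpace ℝ (Fin d)) M]
    [IsManifold (𝓡 d) (⊤ : ℕ∞) M] [CompactSpace M]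

theorem tubProj_exists [Nonempty M] (i : M → EuclideanSpace ℝ (Fin n))
    (hc : Continuous i) (p : EuclideanSpace ℝ (Fin n)) :
    ∃ y₀, IsMinOn (fun y => ‖p - i y‖) Set.univ y₀ := by
  obtain ⟨y₀, -, h⟩ := isCompact_univ.exists_isMinOn Set.univ_nonempty
    ((continuous_const.sub hc).norm.continuousOn (s := Set.univ))
  exact ⟨y₀, h⟩

noncomputable def tubProj [Nonempty M] (i : M → EuclideanSpace ℝ (Fin n))
    (hc : Continuous i) (p : EuclideanSpace ℝ (Fin n)) : M :=
  (tubProj_exists i hc p).choose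

theorem tubProj_min [Nonempty M] (i : M → EuclideanSpace ℝ (Fin n))
    (hc : Continuous i) (p : EuclideanSpace ℝ (Fin n)) :
    IsMinOn (fun y => ‖p - i y‖) Set.univ (tubProj i hc p) :=
  (tubProj_exists i hc p).choose_spec

theorem tubProj_le [Nonempty M] (i : M → EuclideanSpace ℝ (Fin n))
    (hc : Continuous i) (p : EuclideanSpace ℝ (Fin n)) (y : M) :
    ‖p - i (tubProj i hc p)‖ ≤ ‖p - i y‖ :=
  isMinOn_iff.mp (tubProj_min i hc p) y (Set.mem_univ y)

variable {i : M → EuclideanSpace ℝ (Fin n)} {ε : ℝ}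

theorem tub_unique
    (htub : ∀ (y y' : M) (w w' : EuclideanSpace ℝ (Fin n)),
      w ∈ (LinearMap.range (ContinuousLinearMap.toLinearMap (mfderiv (𝓡 d) (𝓡 n) i y)) :
            Submodule ℝ (EuclideanSpace ℝ (Fin n)))ᗮ → ‖w‖ < ε →
      w' ∈ (LinearMap.range (ContinuousLinearMap.toLinearMap (mfderiv (𝓡 d) (𝓡 n) i y')) :
            Submodule ℝ (EuclideanSpace ℝ (Fin n)))ᗮ → ‖w'‖ < ε →
      i y + w = i y' + w' → y = y' ∧ w = w')
    {p : EuclideanSpace ℝ (Fin n)} {a b : M}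
    (ha : p - i a ∈ (LinearMap.range (ContinuousLinearMap.toLinearMap (mfderiv (𝓡 d) (𝓡 n) i a)) :
      Submodule ℝ (EuclideanSpace ℝ (Fin n)))ᗮ) (ha' : ‖p - i a‖ < ε)
    (hb : p - i b ∈ (LinearMap.range (ContinuousLinearMap.toLinearMap (mfderiv (𝓡 d) (𝓡 n) i b)) :
      Submodule ℝ (EuclideanSpace ℝ (Fin n)))ᗮ) (hb' : ‖p - i b‖ < ε) :
    a = b :=
  (htub a b (p - i a) (p - i b) ha ha' hb hb' (by abel)).1

theorem tubProj_eq [Nonempty M] (hsmooth : ContMDiff (𝓡 d) (𝓡 n) (⊤ : ℕ∞) i)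
    (hc : Continuous i)
    (htub : ∀ (y y' : M) (w w' : EuclideanSpace ℝ (Fin n)),
      w ∈ (LinearMap.range (ContinuousLinearMap.toLinearMap (mfderiv (𝓡 d) (𝓡 n) i y)) :
            Submodule ℝ (EuclideanSpace ℝ (Fin n)))ᗮ → ‖w‖ < ε →
      w' ∈ (LinearMap.range (ContinuousLinearMap.toLinearMap (mfderiv (𝓡 d) (𝓡 n) i y')) :
            Submodule ℝ (EuclideanSpace ℝ (Fin n)))ᗮ → ‖w'‖ < ε →
      i y + w = i y' + w' → y = y' ∧ w = w')
    {p w : EuclideanSpace ℝ (Fin n)} {y : M}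
    (hw : w ∈ (LinearMap.range (ContinuousLinearMap.toLinearMap (mfderiv (𝓡 d) (𝓡 n) i y)) :
      Submodule ℝ (EuclideanSpace ℝ (Fin n)))ᗮ)
    (hwε : ‖w‖ < ε) (hp : p = i y + w) :
    tubProj i hc p = y := by
  have hpy : p - i y = w := by rw [hp]; abel
  have h1 : ‖p - i (tubProj i hc p)‖ < ε :=
    lt_of_le_of_lt (tubProj_le i hc p y) (by rw [hpy]; exact hwε)
  have h2 := aux_minOn_normal hsmooth p (tubProj_min i hc p)
  exact tub_unique htub h2 h1 (hpy ▸ hw) (by rw [hpy]; exact hwε)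

theorem tubProj_i_continuousOn [Nonempty M] (hsmooth : ContMDiff (𝓡 d) (𝓡 n) (⊤ : ℕ∞) i)
    (hc : Continuous i)
    (htub : ∀ (y y' : M) (w w' : EuclideanSpace ℝ (Fin n)),
      w ∈ (LinearMap.range (ContinuousLinearMap.toLinearMap (mfderiv (𝓡 d) (𝓡 n) i y)) :
            Submodule ℝ (EuclideanSpace ℝ (Fin n)))ᗮ → ‖w‖ < ε →
      w' ∈ (LinearMap.range (ContinuousLinearMap.toLinearMap (mfderiv (𝓡 d) (𝓡 n) i y')) :
            Submodule ℝ (EuclideanSpace ℝ (Fin n)))ᗮ → ‖w'‖ < ε →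
      i y + w = i y' + w' → y = y' ∧ w = w') :
    ContinuousOn (fun p => i (tubProj i hc p))
      {p : EuclideanSpace ℝ (Fin n) | ∃ y, ‖p - i y‖ < ε} := by
  intro p hp
  apply ContinuousAt.continuousWithinAt
  apply tendsto_of_subseq_tendsto
  intro ns hns
  have hK : IsCompact (i '' Set.univ) := isCompact_univ.image hc
  obtain ⟨a, haK, φ, hφ, hconv⟩ := hK.tendsto_subseq
    (x := fun j => i (tubProj i hc (ns j)))
    (fun j => Set.mem_image_of_mem i (Set.mem_univ _))
  obtain ⟨ystar, -, rfl⟩ := haK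
  refine ⟨φ, ?_⟩
  have hnsφ : Filter.Tendsto (fun j => ns (φ j)) Filter.atTop (𝓝 p) :=
    hns.comp hφ.tendsto_atTop
  have hminstar : IsMinOn (fun y => ‖p - i y‖) Set.univ ystar := by
    apply isMinOn_iff.mpr
    intro y _
    have hj : ∀ j, ‖ns (φ j) - i (tubProj i hc (ns (φ j)))‖ ≤ ‖ns (φ j) - i y‖ :=
      fun j => tubProj_le i hc (ns (φ j)) y
    have t1 : Filter.Tendsto (fun j => ‖ns (φ j) - i (tubProj i hc (ns (φ j)))‖)
        Filter.atTop (𝓝 ‖p - i ystar‖) := (hnsφ.sub hconv).norm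
    have t2 : Filter.Tendsto (fun j => ‖ns (φ j) - i y‖)
        Filter.atTop (𝓝 ‖p - i y‖) := (hnsφ.sub tendsto_const_nhds).norm
    exact le_of_tendsto_of_tendsto' t1 t2 hj
  obtain ⟨y₀, hy₀⟩ := hp
  have hv1 : ‖p - i ystar‖ < ε :=
    lt_of_le_of_lt (isMinOn_iff.mp hminstar y₀ (Set.mem_univ y₀)) hy₀
  have hv2 : ‖p - i (tubProj i hc p)‖ < ε :=
    lt_of_le_of_lt (tubProj_le i hc p y₀) hy₀
  have heq : ystar = tubProj i hc p :=
    tub_unique htub (aux_minOn_normal hsmooth p hminstar) hv1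
      (aux_minOn_normal hsmooth p (tubProj_min i hc p)) hv2
  rw [heq] at hconv
  exact hconv

end TubularAux

/-- If `i : M → ℝⁿ` is a smooth embedding of a compact smooth manifold admitting a tubular
neighborhood of radius `ε`, and `v = i x + w` lies in this tubular neighborhood (`w` normal
to `M` at `x` with `‖w‖ < ε`), then the open set `U = {y ∈ M : ‖v − i y‖ < ε}` is a
contractible space (in particular nonempty, since it contains `x`). -/
theorem tubular_nbhd_ball_contractible {d n : ℕ} {M : Type*} [TopologicalSpace M]
    [ChartedSpace (EuclideanSpace ℝ (Fin d)) M]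
    [IsManifold (𝓡 d) (⊤ : ℕ∞) M] [CompactSpace M]
    (i : M → EuclideanSpace ℝ (Fin n))
    (hsmooth : ContMDiff (𝓡 d) (𝓡 n) (⊤ : ℕ∞) i)
    (hinj : Function.Injective i)
    (hemb : IsEmbedding i)
    (himm : ∀ y : M, Function.Injective (mfderiv (𝓡 d) (𝓡 n) i y))
    (ε : ℝ) (hε : 0 < ε)
    (htub : ∀ (y y' : M) (w w' : EuclideanSpace ℝ (Fin n)),
      w ∈ (LinearMap.range (ContinuousLinearMap.toLinearMap (mfderiv (𝓡 d) (𝓡 n) i y)) :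
            Submodule ℝ (EuclideanSpace ℝ (Fin n)))ᗮ → ‖w‖ < ε →
      w' ∈ (LinearMap.range (ContinuousLinearMap.toLinearMap (mfderiv (𝓡 d) (𝓡 n) i y')) :
            Submodule ℝ (EuclideanSpace ℝ (Fin n)))ᗮ → ‖w'‖ < ε →
      i y + w = i y' + w' → y = y' ∧ w = w')
    (v : EuclideanSpace ℝ (Fin n)) (x : M) (w : EuclideanSpace ℝ (Fin n))
    (hw : w ∈ (LinearMap.range (ContinuousLinearMap.toLinearMap (mfderiv (𝓡 d) (𝓡 n) i x)) :
            Submodule ℝ (EuclideanSpace ℝ (Fin n)))ᗮ)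
    (hwε : ‖w‖ < ε) (hv : v = i x + w) :
    ‖v - i x‖ < ε ∧ ContractibleSpace {y : M // ‖v - i y‖ < ε} := by
  haveI : Nonempty M := ⟨x⟩
  have hc : Continuous i := hemb.continuous
  have hvx : ‖v - i x‖ < ε := by
    have : v - i x = w := by rw [hv]; abel
    rw [this]; exact hwε
  refine ⟨hvx, ?_⟩
  set U := {y : M // ‖v - i y‖ < ε} with hU
  -- the straight-line map into the tube
  set σ : ↑(Set.Icc (0:ℝ) 1) × U → EuclideanSpace ℝ (Fin n) :=
    fun q => i (q.2 : M) + (q.1 : ℝ) • (v - i (q.2 : M)) with hσ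
  have hσc : Continuous σ := by
    have h2 : Continuous fun q : ↑(Set.Icc (0:ℝ) 1) × U => i (q.2 : M) :=
      hc.comp (continuous_subtype_val.comp continuous_snd)
    exact h2.add ((continuous_subtype_val.comp continuous_fst).smul
      (continuous_const.sub h2))
  have hkey : ∀ q : ↑(Set.Icc (0:ℝ) 1) × U,
      ‖σ q - i (q.2 : M)‖ = (q.1 : ℝ) * ‖v - i (q.2 : M)‖ ∧
      ‖v - σ q‖ = (1 - (q.1 : ℝ)) * ‖v - i (q.2 : M)‖ := by
    rintro ⟨t, y⟩
    have ht0 : (0:ℝ) ≤ (t : ℝ) := t.2.1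
    have ht1 : (t : ℝ) ≤ 1 := t.2.2
    constructor
    · have : σ (t, y) - i (y : M) = (t : ℝ) • (v - i (y : M)) := by
        simp only [hσ]; abel
      rw [this, norm_smul, Real.norm_eq_abs, abs_of_nonneg ht0]
    · have : v - σ (t, y) = (1 - (t : ℝ)) • (v - i (y : M)) := by
        simp only [hσ, sub_smul, one_smul]; abel
      rw [this, norm_smul, Real.norm_eq_abs, abs_of_nonneg (by linarith)]
  have hσD : ∀ q : ↑(Set.Icc (0:ℝ) 1) × U, ∃ y, ‖σ q - i y‖ < ε := by
    intro q
    refine ⟨(q.2 : M), ?_⟩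
    rw [(hkey q).1]
    have hy : ‖v - i (q.2 : M)‖ < ε := q.2.2
    have ht1 : (q.1 : ℝ) ≤ 1 := q.1.2.2
    have ht0 : (0:ℝ) ≤ (q.1 : ℝ) := q.1.2.1
    nlinarith [norm_nonneg (v - i (q.2 : M))]
  have hmem : ∀ q : ↑(Set.Icc (0:ℝ) 1) × U, ‖v - i (tubProj i hc (σ q))‖ < ε := by
    intro q
    have hy : ‖v - i (q.2 : M)‖ < ε := q.2.2
    have htri : ‖v - i (tubProj i hc (σ q))‖ ≤ ‖v - σ q‖ + ‖σ q - i (tubProj i hc (σ q))‖ := by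
      have := dist_triangle v (σ q) (i (tubProj i hc (σ q)))
      simpa [dist_eq_norm] using this
    have hle : ‖σ q - i (tubProj i hc (σ q))‖ ≤ ‖σ q - i (q.2 : M)‖ :=
      tubProj_le i hc (σ q) (q.2 : M)
    have h1 := (hkey q).1
    have h2 := (hkey q).2
    calc ‖v - i (tubProj i hc (σ q))‖
        ≤ ‖v - σ q‖ + ‖σ q - i (tubProj i hc (σ q))‖ := htri
      _ ≤ ‖v - σ q‖ + ‖σ q - i (q.2 : M)‖ := by linarith
      _ = ‖v - i (q.2 : M)‖ := by rw [h1, h2]; ring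
      _ < ε := hy
  rw [contractible_iff_id_nullhomotopic]
  refine ⟨⟨x, hvx⟩, ?_⟩
  constructor
  exact
  { toFun := fun q => ⟨tubProj i hc (σ q), hmem q⟩
    continuous_toFun := by
      apply Continuous.subtype_mk
      rw [hemb.continuous_iff]
      exact (tubProj_i_continuousOn hsmooth hc htub).comp_continuous hσc hσD
    map_zero_left := by
      rintro ⟨y, hy⟩
      apply Subtype.ext
      have hσ0 : σ (0, ⟨y, hy⟩) = i y := by simp [hσ]
      show tubProj i hc (σ (0, ⟨y, hy⟩)) = y
      rw [hσ0]
      exact tubProj_eq hsmooth hc htub (Submodule.zero_mem _)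
        (by rw [norm_zero]; exact hε) (by rw [add_zero])
    map_one_left := by
      rintro ⟨y, hy⟩
      apply Subtype.ext
      have hσ1 : σ (1, ⟨y, hy⟩) = v := by simp [hσ]
      show tubProj i hc (σ (1, ⟨y, hy⟩)) = x
      rw [hσ1]
      exact tubProj_eq hsmooth hc htub hw hwε hv }
end

section
/- Let M be a smooth manifold without boundary, and let i : M → ℝⁿ be an infinitely differentiable map admitting a tubular neighborhood of radius ε for some ε > 0. Suppose v = i(x) + w for some x ∈ M and w ∈ T_xᗮ with ‖w‖ < ε. If y ∈ M satisfies ‖v − i(y)‖ < ε and y is a critical point of the function z ↦ ‖v − i(z)‖² on M (its derivative mfderiv at y is the zero map), then y = x. In other words, a point v of the tubular neighborhood has a unique critical point of its squared-distance function within distance ε. -/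
open scoped Manifold RealInnerProductSpace

/-- If `i : M → ℝⁿ` is a smooth map admitting a tubular neighborhood of radius `ε`, and
`v = i x + w` with `w` normal to `M` at `x` and `‖w‖ < ε`, then any `y ∈ M` with
`‖v − i y‖ < ε` which is a critical point of the squared-distance function `z ↦ ‖v − i z‖²`
must equal `x`. -/
theorem tubular_nbhd_unique_critical_point {d n : ℕ} {M : Type*} [TopologicalSpace M]
    [ChartedSpace (EuclideanSpace ℝ (Fin d)) M]
    [IsManifold (𝓡 d) (⊤ : ℕ∞) M]
    (i : M → EuclideanSpace ℝ (Fin n))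
    (hsmooth : ContMDiff (𝓡 d) (𝓡 n) (⊤ : ℕ∞) i)
    (ε : ℝ) (hε : 0 < ε)
    (htub : ∀ (y y' : M) (w w' : EuclideanSpace ℝ (Fin n)),
      w ∈ (LinearMap.range (mfderiv (𝓡 d) (𝓡 n) i y).toLinearMap :
            Submodule ℝ (EuclideanSpace ℝ (Fin n)))ᗮ → ‖w‖ < ε →
      w' ∈ (LinearMap.range (mfderiv (𝓡 d) (𝓡 n) i y').toLinearMap :
            Submodule ℝ (EuclideanSpace ℝ (Fin n)))ᗮ → ‖w'‖ < ε →
      i y + w = i y' + w' → y = y' ∧ w = w')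
    (v : EuclideanSpace ℝ (Fin n)) (x : M) (w : EuclideanSpace ℝ (Fin n))
    (hw : w ∈ (LinearMap.range (mfderiv (𝓡 d) (𝓡 n) i x).toLinearMap :
            Submodule ℝ (EuclideanSpace ℝ (Fin n)))ᗮ)
    (hwε : ‖w‖ < ε) (hv : v = i x + w)
    (y : M) (hy : ‖v - i y‖ < ε)
    (hcrit : mfderiv (𝓡 d) 𝓘(ℝ, ℝ) (fun z => ‖v - i z‖ ^ 2) y = 0) :
    y = x := by
  set g : EuclideanSpace ℝ (Fin n) → ℝ := fun u => ‖v - u‖ ^ 2 with hg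
  have hgd : HasFDerivAt g ((-2 : ℝ) • innerSL ℝ (v - i y)) (i y) := by
    have h := ((hasFDerivAt_id (i y)).const_sub v).norm_sq
    refine h.congr_fderiv ?_
    ext u
    simp [two_smul]
  have hdi : MDifferentiableAt (𝓡 d) (𝓡 n) i y := hsmooth.mdifferentiableAt (by simp)
  have hdg : MDifferentiableAt (𝓡 n) 𝓘(ℝ, ℝ) g (i y) :=
    hgd.differentiableAt.mdifferentiableAt
  have hcomp : mfderiv (𝓡 d) 𝓘(ℝ, ℝ) (g ∘ i) y =
      (mfderiv (𝓡 n) 𝓘(ℝ, ℝ) g (i y)).comp (mfderiv (𝓡 d) (𝓡 n) i y) :=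
    mfderiv_comp y hdg hdi
  have hgeq : mfderiv (𝓡 n) 𝓘(ℝ, ℝ) g (i y) = (-2 : ℝ) • innerSL ℝ (v - i y) := by
    rw [mfderiv_eq_fderiv]
    exact hgd.fderiv
  have hmem : v - i y ∈ (LinearMap.range (mfderiv (𝓡 d) (𝓡 n) i y).toLinearMap :
      Submodule ℝ (EuclideanSpace ℝ (Fin n)))ᗮ := by
    intro u hu
    obtain ⟨ξ, rfl⟩ := hu
    have h0 : mfderiv (𝓡 d) 𝓘(ℝ, ℝ) (g ∘ i) y = 0 := hcrit
    have h0' := hcomp.symm.trans h0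
    rw [hgeq] at h0'
    have h1pre := DFunLike.congr_fun h0' ξ
    simp only [ContinuousLinearMap.coe_comp', Function.comp_apply] at h1pre
    have h1 : ((-2 : ℝ) • innerSL ℝ (v - i y)) ((mfderiv (𝓡 d) (𝓡 n) i y) ξ) = (0 : ℝ) := h1pre
    replace h1 : (-2 : ℝ) * ⟪v - i y, (mfderiv (𝓡 d) (𝓡 n) i y) ξ⟫ = 0 := h1
    have h2 : ⟪v - i y, (mfderiv (𝓡 d) (𝓡 n) i y) ξ⟫ = 0 := by linarith
    rw [real_inner_comm]
    exact h2
  have key := htub y x (v - i y) w hmem hy hw hwε (by rw [hv]; abel)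
  exact key.1
end

section
/- Let M be a compact smooth manifold without boundary, and let i : M → ℝⁿ be a smooth embedding admitting a tubular neighborhood of radius ε for some ε > 0. Let c : ℝ → ℝⁿ be a twice continuously differentiable curve whose image is contained in i(M), such that ‖c'(t)‖ = 1 for all t, and such that for every t the acceleration c''(t) is orthogonal to T_y, where y is the unique point of M with i(y) = c(t) (i.e. c is a unit-speed geodesic of the submanifold i(M)). Then ‖c''(t)‖ ≤ 1/ε for all t. -/
open scoped Manifold RealInnerProductSpace
open Topology
open Set Filter

theorem key_lemma {d n : ℕ} {M : Type*} [TopologicalSpace M]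
    [ChartedSpace (EuclideanSpace ℝ (Fin d)) M]
    [IsManifold (𝓡 d) (⊤ : ℕ∞) M] [CompactSpace M]
    (i : M → EuclideanSpace ℝ (Fin n))
    (hsmooth : ContMDiff (𝓡 d) (𝓡 n) (⊤ : ℕ∞) i)
    (ε : ℝ)
    (htub : ∀ (y y' : M) (w w' : EuclideanSpace ℝ (Fin n)),
      w ∈ (LinearMap.range (mfderiv (𝓡 d) (𝓡 n) i y).toLinearMap :
            Submodule ℝ (EuclideanSpace ℝ (Fin n)))ᗮ → ‖w‖ < ε →
      w' ∈ (LinearMap.range (mfderiv (𝓡 d) (𝓡 n) i y').toLinearMap :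
            Submodule ℝ (EuclideanSpace ℝ (Fin n)))ᗮ → ‖w'‖ < ε →
      i y + w = i y' + w' → y = y' ∧ w = w')
    (y₀ : M) (w : EuclideanSpace ℝ (Fin n))
    (hw : w ∈ (LinearMap.range (mfderiv (𝓡 d) (𝓡 n) i y₀).toLinearMap :
            Submodule ℝ (EuclideanSpace ℝ (Fin n)))ᗮ)
    (hwε : ‖w‖ < ε) :
    ∀ y : M, ‖w‖ ≤ ‖i y - (i y₀ + w)‖ := by
  set q := i y₀ + w with hq
  have hicont : Continuous i := hsmooth.continuous
  have hcont : Continuous fun y : M => ‖i y - q‖ ^ 2 := by fun_prop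
  obtain ⟨y₁, -, hy₁⟩ := isCompact_univ.exists_isMinOn ⟨y₀, trivial⟩ hcont.continuousOn
  have hmin : ∀ y : M, ‖i y₁ - q‖ ^ 2 ≤ ‖i y - q‖ ^ 2 := fun y => hy₁ (mem_univ y)
  set e := extChartAt (𝓡 d) y₁ with he
  set x₁ := e y₁ with hx₁
  set F : EuclideanSpace ℝ (Fin d) → EuclideanSpace ℝ (Fin n) := fun x => i (e.symm x) with hF
  have h := (hsmooth y₁).mdifferentiableAt (by simp)
  have h1 := h.differentiableWithinAt_writtenInExtChartAt
  have h2 := h.mfderiv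
  simp only [writtenInExtChartAt, extChartAt_model_space_eq_id, PartialEquiv.refl_coe,
    Function.comp_def, id, modelWithCornersSelf_coe, Set.range_id, differentiableWithinAt_univ,
    fderivWithin_univ] at h1 h2
  have hFx₁ : F x₁ = i y₁ := congrArg i (extChartAt_to_inv y₁)
  have horth : q - i y₁ ∈ (LinearMap.range (mfderiv (𝓡 d) (𝓡 n) i y₁).toLinearMap :
      Submodule ℝ (EuclideanSpace ℝ (Fin n)))ᗮ := by
    rw [Submodule.mem_orthogonal]
    intro u hu
    obtain ⟨v, hv⟩ := hu
    have hv' : fderiv ℝ F x₁ (v : EuclideanSpace ℝ (Fin d)) = u := by rw [← hv, h2]; rfl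
    set v' : EuclideanSpace ℝ (Fin d) := v with hv'def
    have hγ : HasDerivAt (fun s : ℝ => x₁ + s • v') v' 0 := by
      simpa using ((hasDerivAt_id (0:ℝ)).smul_const v').const_add x₁
    have hγ0 : x₁ + (0:ℝ) • v' = x₁ := by simp
    have hFat : HasFDerivAt F (fderiv ℝ F x₁) ((fun s : ℝ => x₁ + s • v') 0) := by
      simp only [hγ0]; exact h1.hasFDerivAt
    have hFγ : HasDerivAt (fun s : ℝ => F (x₁ + s • v')) (fderiv ℝ F x₁ v') 0 := by
      simpa [Function.comp_def] using hFat.comp_hasDerivAt (0:ℝ) hγ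
    have hFγ' : HasDerivAt (fun s : ℝ => F (x₁ + s • v') - q) (fderiv ℝ F x₁ v') 0 :=
      hFγ.sub_const q
    have hin : HasDerivAt (fun s : ℝ => ⟪F (x₁ + s • v') - q, F (x₁ + s • v') - q⟫)
        (⟪F (x₁ + (0:ℝ) • v') - q, fderiv ℝ F x₁ v'⟫
          + ⟪fderiv ℝ F x₁ v', F (x₁ + (0:ℝ) • v') - q⟫) 0 := hFγ'.inner ℝ hFγ'
    have hlm : IsLocalMin (fun s : ℝ => ⟪F (x₁ + s • v') - q, F (x₁ + s • v') - q⟫) 0 := by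
      apply Filter.Eventually.of_forall
      intro s
      simp only [real_inner_self_eq_norm_sq, hγ0, hFx₁]
      exact hmin (e.symm (x₁ + s • v'))
    have h0 := hlm.hasDerivAt_eq_zero hin
    rw [hγ0, hFx₁] at h0
    rw [real_inner_comm (i y₁ - q)] at h0
    have hz0 : ⟪i y₁ - q, fderiv ℝ F x₁ v'⟫ = 0 := by linarith
    have hz : ⟪u, i y₁ - q⟫ = 0 := by rw [← hv', real_inner_comm]; exact hz0
    rw [show q - i y₁ = -(i y₁ - q) by abel, inner_neg_right, hz, neg_zero]
  -- distance to minimizer is < ε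
  have hle : ‖i y₁ - q‖ ≤ ‖w‖ := by
    have h1' := hmin y₀
    have : i y₀ - q = -w := by rw [hq]; abel
    rw [this, norm_neg] at h1'
    exact (pow_le_pow_iff_left₀ (norm_nonneg _) (norm_nonneg _) two_ne_zero).mp h1'
  have hlt : ‖q - i y₁‖ < ε := by rw [norm_sub_rev]; exact lt_of_le_of_lt hle hwε
  obtain ⟨hyy, hww⟩ := htub y₁ y₀ (q - i y₁) w horth hlt hw hwε (by rw [hq]; abel)
  intro y
  have : ‖w‖ ^ 2 ≤ ‖i y - q‖ ^ 2 := by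
    calc ‖w‖ ^ 2 = ‖i y₁ - q‖ ^ 2 := by rw [show i y₁ - q = -w by rw [← hww]; abel, norm_neg]
    _ ≤ _ := hmin y
  exact (pow_le_pow_iff_left₀ (norm_nonneg _) (norm_nonneg _) two_ne_zero).mp this

-- the contradiction machinery: f has global min at t₀, deriv f = h, h t₀ = 0, h' (t₀) < 0 → False
theorem second_deriv_contra (g h : ℝ → ℝ) (t₀ L : ℝ)
    (hg : ∀ t, HasDerivAt g (h t) t)
    (hmin : ∀ t, g t₀ ≤ g t)
    (h0 : h t₀ = 0) (hL : HasDerivAt h L t₀) (hLneg : L < 0) : False := by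
  have hslope : Tendsto (slope h t₀) (𝓝[≠] t₀) (𝓝 L) :=
    hasDerivAt_iff_tendsto_slope.mp hL
  have hev : ∀ᶠ s in 𝓝[≠] t₀, slope h t₀ s < 0 := hslope.eventually_lt_const hLneg
  have hev' : ∀ᶠ s in 𝓝[>] t₀, slope h t₀ s < 0 :=
    hev.filter_mono (nhdsWithin_mono t₀ (fun x hx => ne_of_gt hx))
  obtain ⟨b, hb, hsub⟩ := mem_nhdsGT_iff_exists_Ioo_subset.mp hev'
  set t₁ := (t₀ + b) / 2 with ht₁
  have ht₁mem : t₁ ∈ Ioo t₀ b := by constructor <;> [skip; skip] <;> (simp only [ht₁]; linarith [hb.out])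
  have hanti : StrictAntiOn g (Icc t₀ t₁) := by
    apply strictAntiOn_of_deriv_neg (convex_Icc t₀ t₁)
    · exact (fun t _ => (hg t).differentiableAt.continuousAt.continuousWithinAt)
    · intro x hx
      rw [interior_Icc] at hx
      have hxb : x ∈ Ioo t₀ b := ⟨hx.1, lt_trans hx.2 ht₁mem.2⟩
      have : slope h t₀ x < 0 := hsub hxb
      rw [slope_def_field] at this
      have hx0 : 0 < x - t₀ := by linarith [hx.1]
      rw [(hg x).deriv]
      have := (div_neg_iff.mp this)
      rcases this with ⟨h1, h2⟩ | ⟨h1, h2⟩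
      · linarith
      · linarith [h0]
  have : g t₁ < g t₀ := hanti ⟨le_refl t₀, le_of_lt ht₁mem.1⟩ ⟨le_of_lt ht₁mem.1, le_refl t₁⟩ ht₁mem.1
  exact absurd (hmin t₁) (by linarith)
/-- If `i : M → ℝⁿ` is a smooth embedding of a compact smooth manifold admitting a tubular
neighborhood of radius `ε`, then every unit-speed geodesic `c` of the submanifold `i(M)`
(a twice continuously differentiable curve in `i(M)` with `‖c'‖ = 1` whose acceleration is
everywhere normal to `i(M)`) satisfies `‖c''(t)‖ ≤ 1/ε` for all `t`. -/
theorem geodesic_acceleration_bound {d n : ℕ} {M : Type*} [TopologicalSpace M]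
    [ChartedSpace (EuclideanSpace ℝ (Fin d)) M]
    [IsManifold (𝓡 d) (⊤ : ℕ∞) M] [CompactSpace M]
    (i : M → EuclideanSpace ℝ (Fin n))
    (hsmooth : ContMDiff (𝓡 d) (𝓡 n) (⊤ : ℕ∞) i)
    (hinj : Function.Injective i)
    (hemb : IsEmbedding i)
    (himm : ∀ y : M, Function.Injective (mfderiv (𝓡 d) (𝓡 n) i y))
    (ε : ℝ) (hε : 0 < ε)
    (htub : ∀ (y y' : M) (w w' : EuclideanSpace ℝ (Fin n)),
      w ∈ (LinearMap.range (mfderiv (𝓡 d) (𝓡 n) i y).toLinearMap :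
            Submodule ℝ (EuclideanSpace ℝ (Fin n)))ᗮ → ‖w‖ < ε →
      w' ∈ (LinearMap.range (mfderiv (𝓡 d) (𝓡 n) i y').toLinearMap :
            Submodule ℝ (EuclideanSpace ℝ (Fin n)))ᗮ → ‖w'‖ < ε →
      i y + w = i y' + w' → y = y' ∧ w = w')
    (c : ℝ → EuclideanSpace ℝ (Fin n))
    (hc : ContDiff ℝ 2 c)
    (hrange : Set.range c ⊆ Set.range i)
    (hspeed : ∀ t : ℝ, ‖deriv c t‖ = 1)
    (hgeo : ∀ (t : ℝ) (y : M), i y = c t →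
      deriv (deriv c) t ∈ (LinearMap.range (mfderiv (𝓡 d) (𝓡 n) i y).toLinearMap :
            Submodule ℝ (EuclideanSpace ℝ (Fin n)))ᗮ) :
    ∀ t : ℝ, ‖deriv (deriv c) t‖ ≤ 1 / ε := by
  intro t₀
  by_contra hcon
  push_neg at hcon
  set a := deriv (deriv c) t₀ with ha
  have ha0 : 0 < ‖a‖ := lt_trans (by positivity) hcon
  have hinv : 1 / ‖a‖ < ε := by
    rw [div_lt_iff₀ ha0]
    have := (div_lt_iff₀ hε).mp hcon
    linarith
  set r := (1 / ‖a‖ + ε) / 2 with hr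
  have hr1 : 1 / ‖a‖ < r := by rw [hr]; linarith
  have hr2 : r < ε := by rw [hr]; linarith
  have hr0 : 0 < r := lt_of_le_of_lt (by positivity) hr1
  have hra : 1 < r * ‖a‖ := (div_lt_iff₀ ha0).mp hr1
  obtain ⟨y₀, hy₀⟩ := hrange (Set.mem_range_self t₀)
  set w := (r * ‖a‖⁻¹) • a with hw
  have hwnorm : ‖w‖ = r := by
    rw [hw, norm_smul, Real.norm_eq_abs, abs_of_pos (by positivity)]
    field_simp
  have hamem := hgeo t₀ y₀ hy₀
  have hwmem : w ∈ (LinearMap.range (mfderiv (𝓡 d) (𝓡 n) i y₀).toLinearMap :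
      Submodule ℝ (EuclideanSpace ℝ (Fin n)))ᗮ := by
    exact Submodule.smul_mem _ _ hamem
  have hwε : ‖w‖ < ε := by rw [hwnorm]; exact hr2
  have hkey := key_lemma i hsmooth ε htub y₀ w hwmem hwε
  set q := i y₀ + w with hq
  have hq' : q = c t₀ + w := by rw [hq, hy₀]
  have hct₀ : c t₀ - q = -w := by rw [hq']; abel
  have hlow : ∀ t, r ≤ ‖c t - q‖ := by
    intro t
    obtain ⟨y, hy⟩ := hrange (Set.mem_range_self t)
    have := hkey y
    rw [hy] at this
    rw [← hwnorm]
    exact this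
  -- derivatives of c
  have hd1 : Differentiable ℝ c := hc.differentiable (by norm_num)
  have h2' : ContDiff ℝ ((1:WithTop ℕ∞) + 1) c := by norm_num; exact hc
  have hc1 : ContDiff ℝ 1 (deriv c) := (contDiff_succ_iff_deriv.mp h2').2.2
  have hd2 : Differentiable ℝ (deriv c) := hc1.differentiable one_ne_zero
  -- unit speed : inner of c' with itself is 1, and c' ⊥ c''
  have hcc : ∀ t, ⟪deriv c t, deriv c t⟫ = 1 := fun t => by
    rw [real_inner_self_eq_norm_sq, hspeed]; norm_num
  have horthA : ⟪deriv c t₀, a⟫ = 0 := by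
    have hdd : HasDerivAt (fun t => ⟪deriv c t, deriv c t⟫)
        (⟪deriv c t₀, a⟫ + ⟪a, deriv c t₀⟫) t₀ :=
      (hd2 t₀).hasDerivAt.inner ℝ (hd2 t₀).hasDerivAt
    have hconst : HasDerivAt (fun _ : ℝ => (1:ℝ)) (⟪deriv c t₀, a⟫ + ⟪a, deriv c t₀⟫) t₀ :=
      hdd.congr_of_eventuallyEq (Filter.Eventually.of_forall fun t => (hcc t).symm)
    have h0 := (hasDerivAt_const t₀ (1:ℝ)).unique hconst
    have hcm := real_inner_comm a (deriv c t₀)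
    linarith
  -- the squared-distance function and its derivative
  set g : ℝ → ℝ := fun t => ⟪c t - q, c t - q⟫ with hgdef
  set h : ℝ → ℝ := fun t => ⟪c t - q, deriv c t⟫ + ⟪deriv c t, c t - q⟫ with hh
  have hg : ∀ t, HasDerivAt g (h t) t := fun t =>
    ((hd1 t).hasDerivAt.sub_const q).inner ℝ ((hd1 t).hasDerivAt.sub_const q)
  have hgt₀ : g t₀ = r ^ 2 := by
    simp only [hgdef, hct₀, inner_neg_neg, real_inner_self_eq_norm_sq, norm_neg, hwnorm]
  have hmin : ∀ t, g t₀ ≤ g t := by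
    intro t
    rw [hgt₀]
    simp only [hgdef, real_inner_self_eq_norm_sq]
    exact pow_le_pow_left₀ hr0.le (hlow t) 2
  have haw : ⟪a, -w⟫ = -(r * ‖a‖) := by
    rw [hw, inner_neg_right, real_inner_smul_right, real_inner_self_eq_norm_sq]
    field_simp
  have hwa : ⟪-w, a⟫ = -(r * ‖a‖) := by rw [real_inner_comm]; exact haw
  have hwc : ⟪deriv c t₀, -w⟫ = 0 := by
    rw [hw, inner_neg_right, real_inner_smul_right, horthA]; ring
  have hcw : ⟪-w, deriv c t₀⟫ = 0 := by rw [real_inner_comm]; exact hwc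
  have hL : HasDerivAt h ((⟪c t₀ - q, a⟫ + ⟪deriv c t₀, deriv c t₀⟫)
      + (⟪deriv c t₀, deriv c t₀⟫ + ⟪a, c t₀ - q⟫)) t₀ := by
    have h1 : HasDerivAt (fun t => ⟪c t - q, deriv c t⟫)
        (⟪c t₀ - q, a⟫ + ⟪deriv c t₀, deriv c t₀⟫) t₀ :=
      ((hd1 t₀).hasDerivAt.sub_const q).inner ℝ (hd2 t₀).hasDerivAt
    have h2 : HasDerivAt (fun t => ⟪deriv c t, c t - q⟫)
        (⟪deriv c t₀, deriv c t₀⟫ + ⟪a, c t₀ - q⟫) t₀ :=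
      (hd2 t₀).hasDerivAt.inner ℝ ((hd1 t₀).hasDerivAt.sub_const q)
    exact h1.add h2
  have hLval : (⟪c t₀ - q, a⟫ + ⟪deriv c t₀, deriv c t₀⟫)
      + (⟪deriv c t₀, deriv c t₀⟫ + ⟪a, c t₀ - q⟫) = 2 - 2 * (r * ‖a‖) := by
    rw [hct₀, hcc, hwa, haw]
    ring
  have hLneg : (2:ℝ) - 2 * (r * ‖a‖) < 0 := by linarith
  have hht₀ : h t₀ = 0 := by
    simp only [hh, hct₀]
    rw [hcw, hwc]
    ring
  exact second_deriv_contra g h t₀ _ hg hmin hht₀ hL (hLval ▸ hLneg)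
end

section
/- Let ε > 0 and let γ : ℝ → ℝⁿ be a twice continuously differentiable curve in Euclidean n-space with ‖γ'(0)‖ = 1 and ‖γ''(s)‖ ≤ 1/ε for all s ∈ [0, ε]. Then for every t ∈ [0, ε], one has ⟪γ(t) − γ(0), γ'(0)⟫ ≥ t − t²/(2ε). -/
open scoped RealInnerProductSpace

/-- If `γ` is a C² curve in `ℝⁿ` with unit initial speed and `‖γ''(s)‖ ≤ 1/ε` for
`s ∈ [0, ε]`, then `⟪γ(t) − γ(0), γ'(0)⟫ ≥ t − t²/(2ε)` for every `t ∈ [0, ε]`. -/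
theorem curve_progress_bound {n : ℕ} (ε : ℝ) (hε : 0 < ε)
    (γ : ℝ → EuclideanSpace ℝ (Fin n)) (hγ : ContDiff ℝ 2 γ)
    (hspeed : ‖deriv γ 0‖ = 1)
    (hacc : ∀ s ∈ Set.Icc (0 : ℝ) ε, ‖deriv (deriv γ) s‖ ≤ 1 / ε) :
    ∀ t ∈ Set.Icc (0 : ℝ) ε, t - t ^ 2 / (2 * ε) ≤ ⟪γ t - γ 0, deriv γ 0⟫ := by
  set v := deriv γ 0 with hv
  have hγ2 : ContDiff ℝ ((1:ℕ∞) + 1) γ := by exact_mod_cast hγ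
  have hd1 : Differentiable ℝ γ := hγ.differentiable (by norm_num)
  have hcd : ContDiff ℝ 1 (deriv γ) := (contDiff_succ_iff_deriv.mp hγ2).2.2
  have hd2 : Differentiable ℝ (deriv γ) := hcd.differentiable (by norm_num)
  -- φ s = ⟪deriv γ s, v⟫ - (1 - s/ε)
  set φ : ℝ → ℝ := fun s => ⟪deriv γ s, v⟫ - (1 - s / ε) with hφ
  have hφderiv : ∀ s : ℝ, HasDerivAt φ (⟪deriv (deriv γ) s, v⟫ + 1 / ε) s := by
    intro s
    have h1 : HasDerivAt (fun s => ⟪deriv γ s, v⟫)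
        (⟪deriv γ s, (0 : EuclideanSpace ℝ (Fin n))⟫ + ⟪deriv (deriv γ) s, v⟫) s :=
      ((hd2 s).hasDerivAt).inner ℝ (hasDerivAt_const s v)
    have h2 : HasDerivAt (fun s : ℝ => 1 - s / ε) (-(1 / ε)) s := by
      simpa using ((hasDerivAt_id s).div_const ε).const_sub 1
    have := h1.sub h2
    simp only [inner_zero_right, zero_add] at this
    refine this.congr_deriv ?_
    ring
  have hφ0 : φ 0 = 0 := by
    simp only [hφ]
    rw [real_inner_self_eq_norm_sq, hspeed]
    norm_num
  have hφmono : MonotoneOn φ (Set.Icc 0 ε) := by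
    apply monotoneOn_of_deriv_nonneg (convex_Icc 0 ε)
    · exact fun x _ => ((hφderiv x).continuousAt).continuousWithinAt
    · exact fun x _ => ((hφderiv x).differentiableAt).differentiableWithinAt
    · intro x hx
      rw [interior_Icc] at hx
      rw [(hφderiv x).deriv]
      have hb := hacc x ⟨le_of_lt hx.1, le_of_lt hx.2⟩
      have : -(1 / ε) ≤ ⟪deriv (deriv γ) x, v⟫ := by
        have := abs_real_inner_le_norm (deriv (deriv γ) x) v
        rw [hv, hspeed, mul_one] at this
        nlinarith [abs_le.mp (this.trans hb) |>.1]
      linarith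
  have hφnn : ∀ s ∈ Set.Icc (0:ℝ) ε, 0 ≤ φ s := by
    intro s hs
    have := hφmono (Set.left_mem_Icc.mpr (le_of_lt hε)) hs hs.1
    rw [hφ0] at this; exact this
  -- ψ t = ⟪γ t - γ 0, v⟫ - (t - t²/(2ε))
  set ψ : ℝ → ℝ := fun t => ⟪γ t - γ 0, v⟫ - (t - t ^ 2 / (2 * ε)) with hψ
  have hψderiv : ∀ s : ℝ, HasDerivAt ψ (φ s) s := by
    intro s
    have h1 : HasDerivAt (fun t => ⟪γ t - γ 0, v⟫)
        (⟪γ s - γ 0, (0 : EuclideanSpace ℝ (Fin n))⟫ + ⟪deriv γ s, v⟫) s := by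
      exact (((hd1 s).hasDerivAt).sub_const (γ 0)).inner ℝ (hasDerivAt_const s v)
    have h2 : HasDerivAt (fun t : ℝ => t - t ^ 2 / (2 * ε)) (1 - 2 * s / (2 * ε)) s := by
      have := ((hasDerivAt_pow 2 s).div_const (2 * ε))
      simpa using (show HasDerivAt (fun t : ℝ => t - t ^ 2 / (2 * ε)) _ s from (hasDerivAt_id' s).sub this)
    have := h1.sub h2
    simp only [inner_zero_right, zero_add] at this
    refine this.congr_deriv ?_
    simp only [hφ]
    field_simp
  have hψ0 : ψ 0 = 0 := by simp [hψ]
  have hψmono : MonotoneOn ψ (Set.Icc 0 ε) := by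
    apply monotoneOn_of_deriv_nonneg (convex_Icc 0 ε)
    · exact fun x _ => ((hψderiv x).continuousAt).continuousWithinAt
    · exact fun x _ => ((hψderiv x).differentiableAt).differentiableWithinAt
    · intro x hx
      rw [interior_Icc] at hx
      rw [(hψderiv x).deriv]
      exact hφnn x ⟨le_of_lt hx.1, le_of_lt hx.2⟩
  intro t ht
  have := hψmono (Set.left_mem_Icc.mpr (le_of_lt hε)) ht ht.1
  rw [hψ0] at this
  simp only [hψ] at this
  linarith
end

section
/- Let ε > 0 and let γ : ℝ → ℝⁿ be a twice continuously differentiable curve in Euclidean n-space with ‖γ'(0)‖ = 1 and ‖γ''(s)‖ ≤ 1/ε for all s ∈ [0, ε]. Then for every vector v ∈ ℝⁿ with ⟪v, γ'(0)⟫ = 0, one has ‖γ(ε) − (γ(0) + v)‖ ≥ ε/2. In other words, the endpoint γ(ε) lies at distance at least ε/2 from the affine hyperplane through γ(0) orthogonal to the initial velocity γ'(0). -/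
open scoped RealInnerProductSpace

/-- If `γ` is a C² curve in `ℝⁿ` with unit initial speed and `‖γ''(s)‖ ≤ 1/ε` on `[0, ε]`,
then `γ(ε)` lies at distance at least `ε/2` from the affine hyperplane through `γ(0)`
orthogonal to the initial velocity `γ'(0)`. -/
theorem curve_endpoint_far_from_hyperplane {n : ℕ} (ε : ℝ) (hε : 0 < ε)
    (γ : ℝ → EuclideanSpace ℝ (Fin n)) (hγ : ContDiff ℝ 2 γ)
    (hspeed : ‖deriv γ 0‖ = 1)
    (hacc : ∀ s ∈ Set.Icc (0 : ℝ) ε, ‖deriv (deriv γ) s‖ ≤ 1 / ε) :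
    ∀ v : EuclideanSpace ℝ (Fin n), ⟪v, deriv γ 0⟫ = 0 →
      ε / 2 ≤ ‖γ ε - (γ 0 + v)‖ := by
  intro v hv
  set u := deriv γ 0 with hu
  have h2 : (2 : ℕ∞) = 1 + 1 := by norm_num
  have hd1 : Differentiable ℝ γ := hγ.differentiable (by norm_num)
  have hd2 : Differentiable ℝ (deriv γ) := by
    have h21 : ContDiff ℝ ((1 + 1 : ℕ) : WithTop ℕ∞) γ := by exact_mod_cast hγ
    have := ContDiff.iterate_deriv' 1 1 h21
    rw [Function.iterate_one] at this
    exact this.differentiable (by norm_num)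
  -- Step 1: h s := ⟪deriv γ s, u⟫ satisfies h s ≥ 1 - s/ε on [0, ε]
  set h : ℝ → ℝ := fun s => ⟪deriv γ s, u⟫ with hh
  have hhd : ∀ s, HasDerivAt h (⟪deriv (deriv γ) s, u⟫) s := by
    intro s
    have := HasDerivAt.inner ℝ ((hd2 s).hasDerivAt) (hasDerivAt_const s u)
    simpa using this
  have hstep1 : ∀ s ∈ Set.Icc (0:ℝ) ε, 1 - s / ε ≤ h s := by
    intro s hs
    have hb : ‖h s - h 0‖ ≤ (1/ε) * ‖s - 0‖ := by
      apply Convex.norm_image_sub_le_of_norm_hasDerivWithin_le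
        (f' := fun t => ⟪deriv (deriv γ) t, u⟫)
        (fun t ht => (hhd t).hasDerivWithinAt) ?_ (convex_Icc 0 ε)
        (Set.left_mem_Icc.mpr hε.le) hs
      intro t ht
      calc ‖⟪deriv (deriv γ) t, u⟫‖ ≤ ‖deriv (deriv γ) t‖ * ‖u‖ := by
            simpa using abs_real_inner_le_norm (deriv (deriv γ) t) u
        _ ≤ 1/ε := by rw [hspeed, mul_one]; exact hacc t ht
    have h0 : h 0 = 1 := by
      have : h 0 = ⟪u, u⟫ := rfl
      rw [this, real_inner_self_eq_norm_sq, hspeed]; norm_num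
    have hs0 : 0 ≤ s := hs.1
    rw [Real.norm_eq_abs, Real.norm_eq_abs, sub_zero, abs_of_nonneg hs0] at hb
    have := neg_abs_le (h s - h 0)
    have h1 : -(1/ε * s) ≤ h s - h 0 := by linarith [abs_le.mp hb]
    rw [h0] at h1
    have : s / ε = 1/ε * s := by ring
    linarith [h1, this ▸ le_refl (s/ε)]
  -- Step 2: F s := ⟪γ s, u⟫ - (s - s^2/(2ε)) is monotone on [0, ε]
  set F : ℝ → ℝ := fun s => ⟪γ s, u⟫ - (s - s^2/(2*ε)) with hF
  have hFd : ∀ s, HasDerivAt F (h s - (1 - s/ε)) s := by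
    intro s
    have h1 : HasDerivAt (fun s => ⟪γ s, u⟫) (⟪deriv γ s, u⟫) s := by
      have := HasDerivAt.inner ℝ ((hd1 s).hasDerivAt) (hasDerivAt_const s u)
      simpa using this
    have h2 : HasDerivAt (fun s : ℝ => s - s^2/(2*ε)) (1 - s/ε) s := by
      have := ((hasDerivAt_id s).sub (((hasDerivAt_pow 2 s)).div_const (2*ε)))
      refine HasDerivAt.congr_deriv this ?_
      field_simp
      ring
    exact h1.sub h2
  have hmono : MonotoneOn F (Set.Icc 0 ε) := by
    apply monotoneOn_of_deriv_nonneg (convex_Icc 0 ε)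
    · exact fun x _ => (hFd x).continuousAt.continuousWithinAt
    · exact fun x _ => (hFd x).differentiableAt.differentiableWithinAt
    · intro x hx
      rw [interior_Icc] at hx
      rw [(hFd x).deriv]
      have := hstep1 x ⟨hx.1.le, hx.2.le⟩
      linarith
  have hFe : F 0 ≤ F ε :=
    hmono (Set.left_mem_Icc.mpr hε.le) (Set.right_mem_Icc.mpr hε.le) hε.le
  have key : ε / 2 ≤ ⟪γ ε - (γ 0 + v), u⟫ := by
    have hexp : ⟪γ ε - (γ 0 + v), u⟫ = ⟪γ ε, u⟫ - ⟪γ 0, u⟫ - ⟪v, u⟫ := by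
      rw [inner_sub_left, inner_add_left]; ring
    rw [hexp, hv]
    have : F 0 = ⟪γ 0, u⟫ := by simp [hF]
    have h2 : ε - ε^2/(2*ε) = ε/2 := by field_simp; ring
    simp only [hF] at hFe
    have e0 : (0:ℝ) - 0^2/(2*ε) = 0 := by norm_num
    rw [h2, e0] at hFe
    linarith
  calc ε / 2 ≤ ⟪γ ε - (γ 0 + v), u⟫ := key
    _ ≤ ‖γ ε - (γ 0 + v)‖ * ‖u‖ := real_inner_le_norm _ _
    _ = ‖γ ε - (γ 0 + v)‖ := by rw [hspeed, mul_one]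
end

section
/- Let 𝓑 be a bicategory such that for all objects a, b the hom-category of 1-morphisms a ⟶ b is preadditive and has binary biproducts, and such that left and right whiskering are additive in the 2-morphism variable: h ◁ (η + θ) = h ◁ η + h ◁ θ and (η + θ) ▷ h = η ▷ h + θ ▷ h for all 1-morphisms h and all parallel 2-morphisms η, θ for which these composites are defined. Let X₁, X₂ : a ⟶ b and Y₁, Y₂ : b ⟶ a be 1-morphisms, and suppose there exist adjunctions X₁ ⊣ Y₁ and X₂ ⊣ Y₂ internal to 𝓑 (i.e. (X₁, Y₁) and (X₂, Y₂) are dual pairs). Then there exists an adjunction (X₁ ⊞ X₂) ⊣ (Y₁ ⊞ Y₂) internal to 𝓑, where ⊞ denotes the biproduct in the hom-categories. -/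
open CategoryTheory CategoryTheory.Limits CategoryTheory.Bicategory

set_option linter.unusedSectionVars false



section Aux
variable {B : Type*} [Bicategory B] [∀ a b : B, Preadditive (a ⟶ b)]

-- cross term for left zigzag
lemma cross_left {a b : B} {X' X'' X : a ⟶ b} {Y' Y'' Y : b ⟶ a}
    (hwl0 : ∀ {a b c : B} (h : a ⟶ b) (U V : b ⟶ c), h ◁ (0 : U ⟶ V) = 0)
    (hwr0 : ∀ {a b c : B} (U V : a ⟶ b) (h : b ⟶ c), (0 : U ⟶ V) ▷ h = 0)
    (u : 𝟙 a ⟶ X' ≫ Y') (e : Y'' ≫ X'' ⟶ 𝟙 b)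
    (ι : X' ⟶ X) (π : X ⟶ X'') (ιY : Y' ⟶ Y) (πY : Y ⟶ Y'')
    (h0 : ιY ≫ πY = 0) :
    ((u ≫ ι ▷ Y' ≫ X ◁ ιY) ▷ X) ⊗≫ (X ◁ (πY ▷ X ≫ Y'' ◁ π ≫ e)) = 0 := by
  calc ((u ≫ ι ▷ Y' ≫ X ◁ ιY) ▷ X) ⊗≫ (X ◁ (πY ▷ X ≫ Y'' ◁ π ≫ e))
      = u ▷ X ⊗≫ (ι ▷ Y') ▷ X ⊗≫ X ◁ ((ιY ≫ πY) ▷ X) ⊗≫ X ◁ (Y'' ◁ π) ⊗≫ X ◁ e := by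
        bicategory
    _ = 0 := by rw [h0, hwr0, hwl0]; simp [bicategoricalComp]

lemma diag_left {a b : B} {X' X : a ⟶ b} {Y' Y : b ⟶ a}
    (adj : Bicategory.Adjunction X' Y')
    (ι : X' ⟶ X) (π : X ⟶ X') (ιY : Y' ⟶ Y) (πY : Y ⟶ Y')
    (h1 : ιY ≫ πY = 𝟙 Y') :
    ((adj.unit ≫ ι ▷ Y' ≫ X ◁ ιY) ▷ X) ⊗≫ (X ◁ (πY ▷ X ≫ Y' ◁ π ≫ adj.counit))
      = (λ_ X).hom ≫ (π ≫ ι) ≫ (ρ_ X).inv := by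
  calc ((adj.unit ≫ ι ▷ Y' ≫ X ◁ ιY) ▷ X) ⊗≫ (X ◁ (πY ▷ X ≫ Y' ◁ π ≫ adj.counit))
      = adj.unit ▷ X ⊗≫ (ι ▷ Y') ▷ X ⊗≫ X ◁ ((ιY ≫ πY) ▷ X) ⊗≫ X ◁ (Y' ◁ π) ⊗≫
          X ◁ adj.counit := by bicategory
    _ = adj.unit ▷ X ⊗≫ (ι ▷ (Y' ≫ X) ≫ X ◁ (Y' ◁ π)) ⊗≫ X ◁ adj.counit := by
        rw [h1]; bicategory
    _ = adj.unit ▷ X ⊗≫ (X' ◁ (Y' ◁ π) ≫ ι ▷ (Y' ≫ X')) ⊗≫ X ◁ adj.counit := by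
        rw [← whisker_exchange]
    _ = 𝟙 _ ⊗≫ (adj.unit ▷ X ≫ (X' ≫ Y') ◁ π) ⊗≫ (ι ▷ (Y' ≫ X') ≫ X ◁ adj.counit) ⊗≫ 𝟙 _ := by
        bicategory
    _ = 𝟙 _ ⊗≫ (𝟙 a ◁ π ≫ adj.unit ▷ X') ⊗≫ (X' ◁ adj.counit ≫ ι ▷ 𝟙 b) ⊗≫ 𝟙 _ := by
        rw [← whisker_exchange, ← whisker_exchange]
    _ = 𝟙 a ◁ π ⊗≫ leftZigzag adj.unit adj.counit ⊗≫ ι ▷ 𝟙 b := by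
        bicategory
    _ = 𝟙 a ◁ π ⊗≫ ((λ_ X').hom ≫ (ρ_ X').inv) ⊗≫ ι ▷ 𝟙 b := by
        rw [adj.left_triangle]
    _ = (λ_ X).hom ≫ (π ≫ ι) ≫ (ρ_ X).inv := by bicategory

lemma cross_right {a b : B} {X' X'' X : a ⟶ b} {Y' Y'' Y : b ⟶ a}
    (hwl0 : ∀ {a b c : B} (h : a ⟶ b) (U V : b ⟶ c), h ◁ (0 : U ⟶ V) = 0)
    (hwr0 : ∀ {a b c : B} (U V : a ⟶ b) (h : b ⟶ c), (0 : U ⟶ V) ▷ h = 0)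
    (u : 𝟙 a ⟶ X' ≫ Y') (e : Y'' ≫ X'' ⟶ 𝟙 b)
    (ι : X' ⟶ X) (π : X ⟶ X'') (ιY : Y' ⟶ Y) (πY : Y ⟶ Y'')
    (h0 : ι ≫ π = 0) :
    (Y ◁ (u ≫ ι ▷ Y' ≫ X ◁ ιY)) ⊗≫ ((πY ▷ X ≫ Y'' ◁ π ≫ e) ▷ Y) = 0 := by
  calc (Y ◁ (u ≫ ι ▷ Y' ≫ X ◁ ιY)) ⊗≫ ((πY ▷ X ≫ Y'' ◁ π ≫ e) ▷ Y)
      = Y ◁ u ⊗≫ Y ◁ (ι ▷ Y') ⊗≫ (Y ◁ (X ◁ ιY) ≫ πY ▷ (X ≫ Y)) ⊗≫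
          (Y'' ◁ π) ▷ Y ⊗≫ e ▷ Y := by bicategory
    _ = Y ◁ u ⊗≫ (Y ◁ (ι ▷ Y') ≫ πY ▷ (X ≫ Y')) ⊗≫ Y'' ◁ (X ◁ ιY) ⊗≫
          (Y'' ◁ π) ▷ Y ⊗≫ e ▷ Y := by rw [whisker_exchange]; bicategory
    _ = (Y ◁ u ≫ πY ▷ (X' ≫ Y')) ⊗≫ Y'' ◁ (ι ▷ Y') ⊗≫
          ((Y'' ≫ X) ◁ ιY ≫ (Y'' ◁ π) ▷ Y) ⊗≫ e ▷ Y := by rw [whisker_exchange]; bicategory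
    _ = πY ▷ 𝟙 a ⊗≫ Y'' ◁ u ⊗≫ Y'' ◁ (ι ▷ Y') ⊗≫ (Y'' ◁ π) ▷ Y' ⊗≫
          (Y'' ≫ X'') ◁ ιY ⊗≫ e ▷ Y := by rw [whisker_exchange, whisker_exchange]; bicategory
    _ = πY ▷ 𝟙 a ⊗≫ Y'' ◁ u ⊗≫ Y'' ◁ ((ι ≫ π) ▷ Y') ⊗≫ (Y'' ≫ X'') ◁ ιY ⊗≫ e ▷ Y := by
        bicategory
    _ = 0 := by rw [h0, hwr0, hwl0]; simp [bicategoricalComp]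

lemma diag_right {a b : B} {X' X : a ⟶ b} {Y' Y : b ⟶ a}
    (adj : Bicategory.Adjunction X' Y')
    (ι : X' ⟶ X) (π : X ⟶ X') (ιY : Y' ⟶ Y) (πY : Y ⟶ Y')
    (h1 : ι ≫ π = 𝟙 X') :
    (Y ◁ (adj.unit ≫ ι ▷ Y' ≫ X ◁ ιY)) ⊗≫ ((πY ▷ X ≫ Y' ◁ π ≫ adj.counit) ▷ Y)
      = (ρ_ Y).hom ≫ (πY ≫ ιY) ≫ (λ_ Y).inv := by
  calc (Y ◁ (adj.unit ≫ ι ▷ Y' ≫ X ◁ ιY)) ⊗≫ ((πY ▷ X ≫ Y' ◁ π ≫ adj.counit) ▷ Y)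
      = Y ◁ adj.unit ⊗≫ Y ◁ (ι ▷ Y') ⊗≫ (Y ◁ (X ◁ ιY) ≫ πY ▷ (X ≫ Y)) ⊗≫
          (Y' ◁ π) ▷ Y ⊗≫ adj.counit ▷ Y := by bicategory
    _ = Y ◁ adj.unit ⊗≫ (Y ◁ (ι ▷ Y') ≫ πY ▷ (X ≫ Y')) ⊗≫ Y' ◁ (X ◁ ιY) ⊗≫
          (Y' ◁ π) ▷ Y ⊗≫ adj.counit ▷ Y := by rw [whisker_exchange]; bicategory
    _ = (Y ◁ adj.unit ≫ πY ▷ (X' ≫ Y')) ⊗≫ Y' ◁ (ι ▷ Y') ⊗≫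
          ((Y' ≫ X) ◁ ιY ≫ (Y' ◁ π) ▷ Y) ⊗≫ adj.counit ▷ Y := by
        rw [whisker_exchange]; bicategory
    _ = πY ▷ 𝟙 a ⊗≫ Y' ◁ adj.unit ⊗≫ Y' ◁ ((ι ≫ π) ▷ Y') ⊗≫
          ((Y' ≫ X') ◁ ιY ≫ adj.counit ▷ Y) := by
        rw [whisker_exchange, whisker_exchange]; bicategory
    _ = πY ▷ 𝟙 a ⊗≫ Y' ◁ adj.unit ⊗≫ (adj.counit ▷ Y' ≫ 𝟙 b ◁ ιY) := by
        rw [h1, whisker_exchange]; bicategory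
    _ = πY ▷ 𝟙 a ⊗≫ rightZigzag adj.unit adj.counit ⊗≫ 𝟙 b ◁ ιY := by bicategory
    _ = πY ▷ 𝟙 a ⊗≫ ((ρ_ Y').hom ≫ (λ_ Y').inv) ⊗≫ 𝟙 b ◁ ιY := by rw [adj.right_triangle]
    _ = (ρ_ Y).hom ≫ (πY ≫ ιY) ≫ (λ_ Y).inv := by bicategory

end Aux

/-- In a bicategory whose hom-categories are preadditive with binary biproducts, and in which
whiskering is additive in the 2-morphism variable, the biproduct of two right-dualizable
1-morphisms is right dualizable: adjunctions `X₁ ⊣ Y₁` and `X₂ ⊣ Y₂` internal to the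
bicategory yield an adjunction `X₁ ⊞ X₂ ⊣ Y₁ ⊞ Y₂`. -/
theorem biproduct_dual_pair {B : Type*} [Bicategory B]
    [∀ a b : B, Preadditive (a ⟶ b)]
    [∀ a b : B, HasBinaryBiproducts (a ⟶ b)]
    (hwl : ∀ {a b c : B} (h : a ⟶ b) {X Y : b ⟶ c} (η θ : X ⟶ Y),
      h ◁ (η + θ) = h ◁ η + h ◁ θ)
    (hwr : ∀ {a b c : B} {X Y : a ⟶ b} (η θ : X ⟶ Y) (h : b ⟶ c),
      (η + θ) ▷ h = η ▷ h + θ ▷ h)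
    {a b : B} (X₁ X₂ : a ⟶ b) (Y₁ Y₂ : b ⟶ a)
    (adj₁ : Bicategory.Adjunction X₁ Y₁) (adj₂ : Bicategory.Adjunction X₂ Y₂) :
    Nonempty (Bicategory.Adjunction (X₁ ⊞ X₂) (Y₁ ⊞ Y₂)) := by
  have hwl0 : ∀ {a b c : B} (h : a ⟶ b) (U V : b ⟶ c), h ◁ (0 : U ⟶ V) = 0 := by
    intro a b c h U V
    have := hwl h (0 : U ⟶ V) 0
    rw [add_zero] at this
    exact (left_eq_add.mp this)
  have hwr0 : ∀ {a b c : B} (U V : a ⟶ b) (h : b ⟶ c), (0 : U ⟶ V) ▷ h = 0 := by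
    intro a b c U V h
    have := hwr (0 : U ⟶ V) 0 h
    rw [add_zero] at this
    exact (left_eq_add.mp this)
  set X := X₁ ⊞ X₂
  set Y := Y₁ ⊞ Y₂
  refine ⟨⟨(adj₁.unit ≫ biprod.inl ▷ Y₁ ≫ X ◁ biprod.inl)
      + (adj₂.unit ≫ biprod.inr ▷ Y₂ ≫ X ◁ biprod.inr),
    (biprod.fst ▷ X ≫ Y₁ ◁ biprod.fst ≫ adj₁.counit)
      + (biprod.snd ▷ X ≫ Y₂ ◁ biprod.snd ≫ adj₂.counit), ?_, ?_⟩⟩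
  · dsimp only [leftZigzag, bicategoricalComp]
    rw [hwr, hwl]
    simp only [Preadditive.add_comp, Preadditive.comp_add]
    have t11 := diag_left (X := X) (Y := Y) adj₁ biprod.inl biprod.fst biprod.inl biprod.fst
      biprod.inl_fst
    have t22 := diag_left (X := X) (Y := Y) adj₂ biprod.inr biprod.snd biprod.inr biprod.snd
      biprod.inr_snd
    have t12 := cross_left (X := X) (Y := Y) hwl0 hwr0 adj₁.unit adj₂.counit
      biprod.inl biprod.snd biprod.inl biprod.snd biprod.inl_snd
    have t21 := cross_left (X := X) (Y := Y) hwl0 hwr0 adj₂.unit adj₁.counit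
      biprod.inr biprod.fst biprod.inr biprod.fst biprod.inr_fst
    dsimp only [bicategoricalComp] at t11 t22 t12 t21
    rw [t11, t22, t12, t21]
    rw [add_zero, zero_add, ← Preadditive.comp_add, ← Preadditive.add_comp, biprod.total]
    simp
    exact Category.id_comp _
  · dsimp only [rightZigzag, bicategoricalComp]
    rw [hwr, hwl]
    simp only [Preadditive.add_comp, Preadditive.comp_add]
    have t11 := diag_right (X := X) (Y := Y) adj₁ biprod.inl biprod.fst biprod.inl biprod.fst
      biprod.inl_fst
    have t22 := diag_right (X := X) (Y := Y) adj₂ biprod.inr biprod.snd biprod.inr biprod.snd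
      biprod.inr_snd
    have t12 := cross_right (X := X) (Y := Y) hwl0 hwr0 adj₁.unit adj₂.counit
      biprod.inl biprod.snd biprod.inl biprod.snd biprod.inl_snd
    have t21 := cross_right (X := X) (Y := Y) hwl0 hwr0 adj₂.unit adj₁.counit
      biprod.inr biprod.fst biprod.inr biprod.fst biprod.inr_fst
    dsimp only [bicategoricalComp] at t11 t22 t12 t21
    rw [t11, t22, t12, t21]
    rw [add_zero, zero_add, ← Preadditive.comp_add, ← Preadditive.add_comp, biprod.total]
    simp
    exact Category.id_comp _
end

section
/- Let 𝓑 be a bicategory equipped with a shadow with values in a category 𝒞, consisting of functors ⟪−⟫ on each endo-hom-category together with the cyclic natural transformation θ satisfying the two shadow axioms. Then for all objects A, B of 𝓑 and all 1-morphisms X : A ⟶ B and Y : B ⟶ A, the composite θ_{Y,X} ∘ θ_{X,Y} : ⟪X ≫ Y⟫ ⟶ ⟪X ≫ Y⟫ is the identity morphism; in particular every component of θ is an isomorphism. -/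
open CategoryTheory CategoryTheory.Bicategory

/-- A shadow on a bicategory `B` with values in a category `C`: a functor `⟪−⟫` from each
endo-hom-category of `B` to `C`, together with a cyclic natural transformation
`θ : ⟪X ≫ Y⟫ ⟶ ⟪Y ≫ X⟫` satisfying the hexagon axiom and the two unit axioms. -/
structure BicategoryShadow (B : Type*) [Bicategory B] (C : Type*) [Category C] where
  /-- the shadow functor on each endo-hom-category -/
  shadow : ∀ a : B, (a ⟶ a) ⥤ C
  /-- the cyclic isomorphism -/
  theta : ∀ {a b : B} (X : a ⟶ b) (Y : b ⟶ a),
    (shadow a).obj (X ≫ Y) ⟶ (shadow b).obj (Y ≫ X)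
  theta_natural_left : ∀ {a b : B} {X X' : a ⟶ b} (η : X ⟶ X') (Y : b ⟶ a),
    (shadow a).map (η ▷ Y) ≫ theta X' Y = theta X Y ≫ (shadow b).map (Y ◁ η)
  theta_natural_right : ∀ {a b : B} (X : a ⟶ b) {Y Y' : b ⟶ a} (η : Y ⟶ Y'),
    (shadow a).map (X ◁ η) ≫ theta X Y' = theta X Y ≫ (shadow b).map (η ▷ X)
  hexagon : ∀ {a b c : B} (X : a ⟶ b) (Y : b ⟶ c) (Z : c ⟶ a),
    theta (X ≫ Y) Z ≫ (shadow c).map (α_ Z X Y).inv ≫ theta (Z ≫ X) Y =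
      (shadow a).map (α_ X Y Z).hom ≫ theta X (Y ≫ Z) ≫ (shadow b).map (α_ Y Z X).hom
  unit_right : ∀ {a : B} (X : a ⟶ a),
    theta X (𝟙 a) ≫ (shadow a).map (λ_ X).hom = (shadow a).map (ρ_ X).hom
  unit_left : ∀ {a : B} (X : a ⟶ a),
    theta (𝟙 a) X ≫ (shadow a).map (ρ_ X).hom = (shadow a).map (λ_ X).hom

theorem shadow_theta_squared_key {B : Type*} [Bicategory B] {C : Type*} [Category C]
    (S : BicategoryShadow B C) {a b : B} (X : a ⟶ b) (Y : b ⟶ a) :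
    S.theta X Y ≫ S.theta Y X = 𝟙 ((S.shadow a).obj (X ≫ Y)) := by
  have hX : S.theta X Y =
      (S.shadow a).map ((λ_ X).inv ▷ Y) ≫ S.theta (𝟙 a ≫ X) Y ≫
        (S.shadow b).map (Y ◁ (λ_ X).hom) := by
    rw [← S.theta_natural_left (λ_ X).hom Y, ← Category.assoc, ← (S.shadow a).map_comp,
      ← comp_whiskerRight, Iso.inv_hom_id, id_whiskerRight, (S.shadow a).map_id,
      Category.id_comp]
  have hY : S.theta Y X =
      (S.shadow b).map ((ρ_ Y).inv ▷ X) ≫ S.theta (Y ≫ 𝟙 a) X ≫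
        (S.shadow a).map (X ◁ (ρ_ Y).hom) := by
    rw [← S.theta_natural_left (ρ_ Y).hom X, ← Category.assoc, ← (S.shadow b).map_comp,
      ← comp_whiskerRight, Iso.inv_hom_id, id_whiskerRight, (S.shadow b).map_id,
      Category.id_comp]
  have hmid : (S.shadow b).map (Y ◁ (λ_ X).hom) ≫ (S.shadow b).map ((ρ_ Y).inv ▷ X) =
      (S.shadow b).map (α_ Y (𝟙 a) X).inv := by
    rw [← (S.shadow b).map_comp]
    congr 1
    rw [← cancel_epi (α_ Y (𝟙 a) X).hom, ← Category.assoc, Bicategory.triangle,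
      ← comp_whiskerRight, Iso.hom_inv_id, id_whiskerRight, Iso.hom_inv_id]
  have hunit : S.theta (𝟙 a) (X ≫ Y) =
      (S.shadow a).map (λ_ (X ≫ Y)).hom ≫ (S.shadow a).map (ρ_ (X ≫ Y)).inv := by
    rw [← S.unit_left (X ≫ Y), Category.assoc, ← (S.shadow a).map_comp, Iso.hom_inv_id,
      (S.shadow a).map_id, Category.comp_id]
  have hhex := S.hexagon (𝟙 a) X Y
  calc S.theta X Y ≫ S.theta Y X
      = (S.shadow a).map ((λ_ X).inv ▷ Y) ≫
          (S.theta (𝟙 a ≫ X) Y ≫ (S.shadow b).map (α_ Y (𝟙 a) X).inv ≫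
            S.theta (Y ≫ 𝟙 a) X) ≫ (S.shadow a).map (X ◁ (ρ_ Y).hom) := by
        rw [hX, hY]
        simp only [Category.assoc, ← hmid]
    _ = (S.shadow a).map ((λ_ X).inv ▷ Y) ≫
          ((S.shadow a).map (α_ (𝟙 a) X Y).hom ≫ S.theta (𝟙 a) (X ≫ Y) ≫
            (S.shadow a).map (α_ X Y (𝟙 a)).hom) ≫ (S.shadow a).map (X ◁ (ρ_ Y).hom) := by
        rw [hhex]
    _ = (S.shadow a).map (((λ_ X).inv ▷ Y) ≫ (α_ (𝟙 a) X Y).hom ≫ (λ_ (X ≫ Y)).hom ≫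
          (ρ_ (X ≫ Y)).inv ≫ (α_ X Y (𝟙 a)).hom ≫ (X ◁ (ρ_ Y).hom)) := by
        rw [hunit]
        simp only [(S.shadow a).map_comp, Category.assoc]
    _ = 𝟙 ((S.shadow a).obj (X ≫ Y)) := by
        rw [← (S.shadow a).map_id]
        congr 1
        simp

/-- For a shadow on a bicategory, the composite `θ_{Y,X} ∘ θ_{X,Y}` is the identity of
`⟪X ≫ Y⟫`; in particular every component of the cyclic transformation `θ` is an
isomorphism. -/
theorem shadow_theta_squared {B : Type*} [Bicategory B] {C : Type*} [Category C]
    (S : BicategoryShadow B C) {a b : B} (X : a ⟶ b) (Y : b ⟶ a) :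
    S.theta X Y ≫ S.theta Y X = 𝟙 ((S.shadow a).obj (X ≫ Y)) ∧ IsIso (S.theta X Y) := by
  exact ⟨shadow_theta_squared_key S X Y,
    ⟨S.theta Y X, shadow_theta_squared_key S X Y, shadow_theta_squared_key S Y X⟩⟩
end
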